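/- arXiv:1209.1074 — 4 statements merged into one kernel-verified Lean document; each statement's English description precedes it below -/
import Mathlib

section
/- (Ball–Ball separation) Let X be a metric space carrying a wallspace structure W such that each ball of finite radius in X is crossed by only finitely many walls, where a wall crosses a subset S ⊆ X if S meets both of its closed halfspaces. Suppose a group G acts on X by isometries preserving the wallspace structure, the action on X is cobounded (there exist x₀ ∈ X and R₀ such that every point of X lies within distance R₀ of the orbit G·x₀), and the induced action on the dual cube complex is proper in the sense that every 0-cube has finite stabilizer in G. Then for each r > 0 there exists m such that whenever d(x₁, x₂) > m, there is a wall separating the r-neighborhood of x₁ from the r-neighborhood of x₂, i.e., these two neighborhoods lie in distinct open halfspaces of that wall. -/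
/-!
Suppose the conclusion fails. By coboundedness there are then elements `g` with `d(x₀, g x₀)`
arbitrarily large such that no wall separates the ball `A = B(x₀, R₀ + r)` from `g A`. Let `c₀`
orient every wall towards `x₀` and let `F` be the finite set of walls crossing `A`. For each such
`g`, the translate `g • c₀` agrees with `c₀` off `F ∪ g F`: a wall outside both has `A` and `g A`
in open halfspaces, and if the orientations differed it would separate them. Along a nonprincipal
ultrafilter on these `g`, the translates `g • c₀` converge to a `0`-cube `c`. For almost every
`g`, `g⁻¹ • c` agrees with `c₀` off the finite set `F`, so `g⁻¹ • c` is eventually constant and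
infinitely many elements `g g₀⁻¹` fix `c`, contradicting properness.
-/

open Pointwise

/-- A wallspace on a set `X`: an indexed family of walls `W i = (U i, V i)` whose closed
halfspaces cover `X`, such that each point betwixts only finitely many walls, any two points
are separated by only finitely many walls, and there are no duplicate genuine partitions. -/
structure Wallspace (X : Type*) (ι : Type*) where
  U : ι → Set X
  V : ι → Set X
  cover : ∀ i, U i ∪ V i = Set.univ
  betwixt_finite : ∀ x : X, {i : ι | x ∈ U i ∩ V i}.Finite
  sep_finite : ∀ x y : X, {i : ι |
      (x ∈ U i \ V i ∧ y ∈ V i \ U i) ∨ (x ∈ V i \ U i ∧ y ∈ U i \ V i)}.Finite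
  no_dup_partition : ∀ i j, i ≠ j →
    ((U i = U j ∧ V i = V j) ∨ (U i = V j ∧ V i = U j)) →
    U i ∩ V i = ∅ → ¬((U i).Nonempty ∧ (V i).Nonempty)

namespace Wallspace

variable {X ι : Type*} (W : Wallspace X ι)

/-- The closed halfspace of wall `i` selected by `b` (`true ↦ U i`, `false ↦ V i`). -/
def side (i : ι) : Bool → Set X
  | true => W.U i
  | false => W.V i

/-- The open halfspace of wall `i` on the side `b`. -/
def openSide (i : ι) (b : Bool) : Set X :=
  W.side i b \ W.side i (!b)

/-- The wall `i` separates the points `x` and `y`: they lie in distinct open halfspaces. -/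
def Separates (i : ι) (x y : X) : Prop :=
  (x ∈ W.U i \ W.V i ∧ y ∈ W.V i \ W.U i) ∨
  (x ∈ W.V i \ W.U i ∧ y ∈ W.U i \ W.V i)

/-- A `0`-cube of the dual cube complex: an orientation `c` of the walls (where `c i` selects
the left halfspace `W.side i (c i)` of the wall `i`) such that any two left halfspaces meet
and every point lies in all but finitely many left halfspaces. -/
def IsZeroCube (c : ι → Bool) : Prop :=
  (∀ i j : ι, (W.side i (c i) ∩ W.side j (c j)).Nonempty) ∧
  (∀ x : X, {i : ι | x ∉ W.side i (c i)}.Finite)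

/-- Distinct walls `i ≠ j` are transverse if all four intersections of closed halfspaces
are nonempty. -/
def Transverse (i j : ι) : Prop :=
  i ≠ j ∧ (W.U i ∩ W.U j).Nonempty ∧ (W.U i ∩ W.V j).Nonempty ∧
    (W.V i ∩ W.U j).Nonempty ∧ (W.V i ∩ W.V j).Nonempty

/-- The wall `i` is reversible at the `0`-cube `c`: the orientation agreeing with `c` except
that the pair at `i` is swapped is again a `0`-cube. -/
def Reversible (c : ι → Bool) (i : ι) : Prop :=
  ∀ c' : ι → Bool, c' i = !(c i) → (∀ j, j ≠ i → c' j = c j) → W.IsZeroCube c'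

/-- The wall `i` crosses the subset `A` if `A` meets both closed halfspaces of `i`. -/
def Crosses (i : ι) (A : Set X) : Prop :=
  (A ∩ W.U i).Nonempty ∧ (A ∩ W.V i).Nonempty

/-- The wall `k` separates the walls `i` and `j`: some closed halfspace of `i` and some
closed halfspace of `j` lie in distinct open halfspaces of `k`. -/
def SeparatesWalls (k i j : ι) : Prop :=
  k ≠ i ∧ k ≠ j ∧ ∃ a bi bj : Bool,
    W.side i bi ⊆ W.openSide k a ∧ W.side j bj ⊆ W.openSide k (!a)

/-- Distinct walls `i`, `j` osculate if they are not transverse and no wall separates them. -/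
def Osculate (i j : ι) : Prop :=
  i ≠ j ∧ ¬ W.Transverse i j ∧ ∀ k : ι, ¬ W.SeparatesWalls k i j

/-- Two `0`-cubes are adjacent if they differ at exactly one wall index. -/
def Adjacent (c d : ι → Bool) : Prop :=
  W.IsZeroCube c ∧ W.IsZeroCube d ∧ ∃! i : ι, c i ≠ d i

end Wallspace

/-- A group `G` acts on the wallspace `W` if it acts on `X` and on the index set so that
the unordered pair of halfspaces of `g • i` is the `g`-translate of that of `i`. -/
def WallspaceAction (G : Type*) [Group G] {X ι : Type*} [MulAction G X] [MulAction G ι]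
    (W : Wallspace X ι) : Prop :=
  ∀ (g : G) (i : ι),
    (W.U (g • i) = g • W.U i ∧ W.V (g • i) = g • W.V i) ∨
    (W.U (g • i) = g • W.V i ∧ W.V (g • i) = g • W.U i)

open Filter

theorem Ultrafilter.exists_eventually_eq_of_mem {β γ : Type*} (𝒰 : Ultrafilter β) {f : β → γ}
    {T : Set γ} (hT : T.Finite) (hf : ∀ b, f b ∈ T) : ∃ a ∈ T, ∀ᶠ b in 𝒰, f b = a :=
  (𝒰.eventually_exists_mem_iff hT).1 (Eventually.of_forall fun b => ⟨f b, hf b, rfl⟩)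

section OrbitLimit

variable {G ι α : Type*} [Group G] [MulAction G ι] [MulAction G α]

theorem eventually_apply_smul_eq_smul_apply_of_notMem (𝒰 : Ultrafilter G) {S : Set G}
    (hS : ∀ᶠ g : G in 𝒰, g ∈ S) {F : Set ι} (hF : F.Finite) {c₀ c : ι → α}
    (hagree : ∀ g ∈ S, ∀ i ∉ F, g • i ∉ F → c₀ (g • i) = g • c₀ i)
    (hc : ∀ j, ∀ᶠ g : G in 𝒰, c j = g • c₀ (g⁻¹ • j)) :
    ∀ᶠ g : G in 𝒰, ∀ i ∉ F, c (g • i) = g • c₀ i := by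
  -- the walls that `g • F` eventually contains; off `F ∪ L` the limit `c` is `c₀`
  set L : Set ι := ⋃ q ∈ F, {j | ∀ᶠ g : G in 𝒰, g • q = j}
  have hL : L.Finite := hF.biUnion fun q _ => Set.Subsingleton.finite fun j hj j' hj' =>
    (Eventually.and hj hj').exists.elim fun _ h => h.1.symm.trans h.2
  have hoff : ∀ j ∉ F, j ∉ L → c j = c₀ j := by
    intro j hjF hjL
    have hmiss : ∀ᶠ g : G in 𝒰, g⁻¹ • j ∉ F := by
      have : ∀ᶠ g : G in 𝒰, ∀ q ∈ F, g • q ≠ j := (eventually_all_finite hF).2 fun q hq =>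
        Ultrafilter.eventually_not.2 fun h => hjL (Set.mem_biUnion hq h)
      filter_upwards [this] with g hg hj
      exact hg _ hj (smul_inv_smul g j)
    obtain ⟨g, hgS, hgF, hcg⟩ := (hS.and (hmiss.and (hc j))).exists
    rw [hcg, ← hagree g hgS _ hgF (by rwa [smul_inv_smul]), smul_inv_smul]
  have hL_mem : ∀ᶠ g : G in 𝒰, ∀ j ∈ L, g⁻¹ • j ∈ F := by
    refine (eventually_all_finite hL).2 fun j hj => ?_
    obtain ⟨q, hq, hqj⟩ := Set.mem_iUnion₂.1 hj
    filter_upwards [hqj] with g hg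
    rwa [← hg, inv_smul_smul]
  have hF_eq : ∀ᶠ g : G in 𝒰, ∀ j ∈ F, c j = g • c₀ (g⁻¹ • j) :=
    (eventually_all_finite hF).2 fun j _ => hc j
  filter_upwards [hS, hL_mem, hF_eq] with g hgS hgL hgF i hi
  by_cases hgi : g • i ∈ F
  · rw [hgF _ hgi, inv_smul_smul]
  · rw [hoff _ hgi fun h => hi (by simpa using hgL _ h), hagree g hgS i hi hgi]

theorem setOf_ne_subset_union_smul {F : Set ι} {c₀ c : ι → α} {g : G}
    (hagree : ∀ i ∉ F, g • i ∉ F → c₀ (g • i) = g • c₀ i)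
    (hg : ∀ i ∉ F, c (g • i) = g • c₀ i) : {i | c i ≠ c₀ i} ⊆ F ∪ g • F := by
  intro i hi
  by_contra hiF
  simp only [Set.mem_union, Set.mem_smul_set_iff_inv_smul_mem, not_or] at hiF
  have hgi : g • g⁻¹ • i ∉ F := by rw [smul_inv_smul]; exact hiF.1
  have hci := hg _ hiF.2
  rw [← hagree _ hiF.2 hgi, smul_inv_smul] at hci
  exact hi hci

theorem infinite_setOf_apply_smul_eq_smul_apply (l : Filter G) [l.NeBot] (hl : l ≤ cofinite)
    {c e : ι → α} (h : ∀ᶠ g in l, ∀ i, c (g • i) = g • e i) :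
    {g : G | ∀ i, c (g • i) = g • c i}.Infinite := by
  have hT : {g : G | ∀ i, c (g • i) = g • e i}.Infinite := fun hfin =>
    (h.and (hl hfin.compl_mem_cofinite)).exists.elim fun _ h => h.2 h.1
  obtain ⟨g₀, hg₀⟩ := h.exists
  refine (hT.image (mul_left_injective g₀⁻¹).injOn).mono ?_
  rintro _ ⟨g, hg, rfl⟩ i
  have h₀ := hg₀ (g₀⁻¹ • i)
  rw [smul_inv_smul] at h₀
  simp only [mul_smul, hg _, h₀, inv_smul_smul]

theorem exists_translate_limit_stabilizer_infinite (P : ι → Set α) (hP : ∀ i, (P i).Finite)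
    (hPsmul : ∀ (g : G) i, ∀ a ∈ P i, g • a ∈ P (g • i)) {c₀ : ι → α} (hc₀ : ∀ i, c₀ i ∈ P i)
    {F : Set ι} (hF : F.Finite) {S : Set G} (hS : S.Infinite)
    (hagree : ∀ g ∈ S, ∀ i ∉ F, g • i ∉ F → c₀ (g • i) = g • c₀ i) :
    ∃ c : ι → α, (∀ i, c i ∈ P i) ∧
      (∀ i j, ∃ g : G, c i = g • c₀ (g⁻¹ • i) ∧ c j = g • c₀ (g⁻¹ • j)) ∧
      {i | c i ≠ c₀ i}.Finite ∧ {g : G | ∀ i, c (g • i) = g • c i}.Infinite := by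
  have := hS.cofinite_inf_principal_neBot
  set 𝒰 := Ultrafilter.of (cofinite ⊓ 𝓟 S)
  have h𝒰 : (𝒰 : Filter G) ≤ cofinite ⊓ 𝓟 S := Ultrafilter.of_le _
  have hS𝒰 : ∀ᶠ g : G in 𝒰, g ∈ S := h𝒰 (mem_inf_of_right (mem_principal_self S))
  choose c hcP hc using fun j => 𝒰.exists_eventually_eq_of_mem (hP j)
    (f := fun g : G => g • c₀ (g⁻¹ • j)) fun g => by simpa using hPsmul g _ _ (hc₀ (g⁻¹ • j))
  replace hc : ∀ j, ∀ᶠ g : G in 𝒰, c j = g • c₀ (g⁻¹ • j) := fun j => (hc j).mono fun _ => Eq.symm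
  have hkey := eventually_apply_smul_eq_smul_apply_of_notMem 𝒰 hS𝒰 hF hagree hc
  -- Off `F`, `g⁻¹ • c` is eventually `c₀`; on the finite set `F` it is eventually constant.
  choose e _ he using fun q => 𝒰.exists_eventually_eq_of_mem (hP q)
    (f := fun g : G => g⁻¹ • c (g • q)) fun g => by simpa using hPsmul g⁻¹ _ _ (hcP (g • q))
  have hT : ∀ᶠ g : G in 𝒰, ∀ q, c (g • q) = g • e q := by
    filter_upwards [hkey, (eventually_all_finite hF).2 fun q _ => he q] with g hg hgF q
    by_cases hq : q ∈ F
    · rw [← hgF q hq, smul_inv_smul]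
    · obtain ⟨g', hg'e, hg'c⟩ := ((he q).and hkey).exists
      rw [hg q hq, ← hg'e, hg'c q hq, inv_smul_smul]
  obtain ⟨g, hgS, hg⟩ := (hS𝒰.and hkey).exists
  exact ⟨c, hcP, fun i j => ((hc i).and (hc j)).exists,
    (hF.union (hF.smul_set (a := g))).subset (setOf_ne_subset_union_smul (hagree g hgS) hg),
    infinite_setOf_apply_smul_eq_smul_apply 𝒰 (h𝒰.trans inf_le_left) hT⟩

end OrbitLimit

namespace Wallspace

variable {X ι : Type*} (W : Wallspace X ι)

/-- The two orientations of the wall `i`, as ordered pairs `(←, →)` of closed halfspaces.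
Unlike a `Bool` choice of side, this is transported by the `G`-action even when `U i = V i`. -/
def orientations (i : ι) : Set (Set X × Set X) := {(W.U i, W.V i), (W.V i, W.U i)}

/-- Since the halfspaces cover `X`, `Disjoint A p.2` says that `A` lies in the open halfspace
`p.1 \ p.2`. -/
def SeparatesSets (i : ι) (A B : Set X) : Prop :=
  ∃ p ∈ W.orientations i, Disjoint A p.2 ∧ Disjoint B p.1

open Classical in
noncomputable def orientationAt (x : X) (i : ι) : Set X × Set X :=
  if x ∈ W.U i then (W.U i, W.V i) else (W.V i, W.U i)

open Classical in
noncomputable def boolOfOrientation (c : ι → Set X × Set X) (i : ι) : Bool :=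
  decide (c i = (W.U i, W.V i))

theorem mem_U_or_V (i : ι) (x : X) : x ∈ W.U i ∨ x ∈ W.V i := by
  rw [← Set.mem_union, W.cover i]; trivial

theorem orientationAt_mem (x : X) (i : ι) : W.orientationAt x i ∈ W.orientations i := by
  unfold orientationAt orientations
  split_ifs <;> simp

theorem mem_orientationAt_fst (x : X) (i : ι) : x ∈ (W.orientationAt x i).1 := by
  unfold orientationAt
  split_ifs with h
  · exact h
  · exact (W.mem_U_or_V i x).resolve_left h

theorem finite_setOf_notMem_orientationAt_fst (x y : X) :
    {i | y ∉ (W.orientationAt x i).1}.Finite := by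
  refine ((W.sep_finite x y).union (W.betwixt_finite x)).subset fun i hi => ?_
  have hx := W.mem_U_or_V i x
  have hy := W.mem_U_or_V i y
  simp only [orientationAt, Set.mem_ofPred_eq] at hi
  split_ifs at hi with hxU <;> simp only [Set.mem_union, Set.mem_ofPred_eq, Set.mem_inter_iff,
    Set.mem_sdiff] <;> tauto

variable {W}

theorem orientations_finite (i : ι) : (W.orientations i).Finite :=
  (Set.finite_singleton _).insert _

theorem eq_swap_of_mem_orientations {i : ι} {p q : Set X × Set X} (hp : p ∈ W.orientations i)
    (hq : q ∈ W.orientations i) (hne : p ≠ q) : q = p.swap := by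
  rcases hp with rfl | rfl <;> rcases hq with rfl | rfl <;> simp_all

theorem disjoint_snd_of_not_crosses {i : ι} {p : Set X × Set X} {A : Set X} {x : X}
    (hp : p ∈ W.orientations i) (hxA : x ∈ A) (hxp : x ∈ p.1) (h : ¬ W.Crosses i A) :
    Disjoint A p.2 := by
  rw [Set.disjoint_iff_inter_eq_empty, ← Set.not_nonempty_iff_eq_empty]
  rcases hp with rfl | rfl
  · exact fun hV => h ⟨⟨x, hxA, hxp⟩, hV⟩
  · exact fun hU => h ⟨hU, ⟨x, hxA, hxp⟩⟩

theorem eq_of_not_separatesSets {i : ι} {p q : Set X × Set X} {A B : Set X}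
    (hp : p ∈ W.orientations i) (hq : q ∈ W.orientations i) (hA : Disjoint A p.2)
    (hB : Disjoint B q.2) (h : ¬ W.SeparatesSets i A B) : p = q := by
  by_contra hne
  rw [eq_swap_of_mem_orientations hp hq hne] at hB
  exact h ⟨p, hp, hA, hB⟩

theorem SeparatesSets.mono {i : ι} {A B A' B' : Set X} (h : W.SeparatesSets i A B)
    (hA : A' ⊆ A) (hB : B' ⊆ B) : W.SeparatesSets i A' B' :=
  let ⟨p, hp, hAp, hBp⟩ := h
  ⟨p, hp, hAp.mono_left hA, hBp.mono_left hB⟩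

theorem SeparatesSets.exists_subset_openSide {i : ι} {A B : Set X}
    (h : W.SeparatesSets i A B) : ∃ b, A ⊆ W.openSide i b ∧ B ⊆ W.openSide i (!b) := by
  obtain ⟨p, hp, hA, hB⟩ := h
  have hU : ∀ {C : Set X}, Disjoint C (W.V i) → C ⊆ W.U i \ W.V i := fun h x hx =>
    ⟨(W.mem_U_or_V i x).resolve_right (h.notMem_of_mem_left hx), h.notMem_of_mem_left hx⟩
  have hV : ∀ {C : Set X}, Disjoint C (W.U i) → C ⊆ W.V i \ W.U i := fun h x hx =>
    ⟨(W.mem_U_or_V i x).resolve_left (h.notMem_of_mem_left hx), h.notMem_of_mem_left hx⟩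
  rcases hp with rfl | rfl
  · exact ⟨true, hU hA, hV hB⟩
  · exact ⟨false, hV hA, hU hB⟩

theorem side_boolOfOrientation {c : ι → Set X × Set X} {i : ι} (hc : c i ∈ W.orientations i) :
    (W.side i (W.boolOfOrientation c i), W.side i (!W.boolOfOrientation c i)) = c i := by
  unfold boolOfOrientation
  by_cases h : c i = (W.U i, W.V i)
  · simp [h, side]
  · rcases hc with h' | h'
    · exact absurd h' h
    · rw [Set.mem_singleton_iff] at h'
      rw [decide_eq_false h, h']
      rfl

section Action

variable {G : Type*} [Group G] [MulAction G X] [MulAction G ι]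

theorem smul_mem_orientations (hact : WallspaceAction G W) (g : G) {i : ι}
    {p : Set X × Set X} (hp : p ∈ W.orientations i) : g • p ∈ W.orientations (g • i) := by
  rcases hact g i with ⟨hU, hV⟩ | ⟨hU, hV⟩ <;> rcases hp with rfl | rfl <;>
    simp [orientations, hU, hV, Prod.smul_mk]

theorem SeparatesSets.smul (hact : WallspaceAction G W) {i : ι} {A B : Set X}
    (h : W.SeparatesSets i A B) (g : G) : W.SeparatesSets (g • i) (g • A) (g • B) :=
  let ⟨p, hp, hA, hB⟩ := h
  ⟨g • p, smul_mem_orientations hact g hp, Set.disjoint_smul_set.2 hA, Set.disjoint_smul_set.2 hB⟩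

theorem orientationAt_smul (hact : WallspaceAction G W) {x : X} {A : Set X} (hx : x ∈ A)
    {g : G} (hg : ∀ j, ¬ W.SeparatesSets j A (g • A)) {i : ι} (hi : ¬ W.Crosses i A)
    (hgi : ¬ W.Crosses (g • i) A) : W.orientationAt x (g • i) = g • W.orientationAt x i :=
  eq_of_not_separatesSets (W.orientationAt_mem x _)
    (smul_mem_orientations hact g (W.orientationAt_mem x i))
    (disjoint_snd_of_not_crosses (W.orientationAt_mem x _) hx (W.mem_orientationAt_fst x _) hgi)
    (Set.disjoint_smul_set.2
      (disjoint_snd_of_not_crosses (W.orientationAt_mem x i) hx (W.mem_orientationAt_fst x i) hi))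
    (hg _)

theorem exists_smul_not_separatesSets [MetricSpace X] [IsIsometricSMul G X]
    (hact : WallspaceAction G W) {x₀ : X} {R₀ r : ℝ} (hR₀ : ∀ x, ∃ g : G, dist x (g • x₀) ≤ R₀)
    {x₁ x₂ : X} (h : ∀ i, ¬ W.SeparatesSets i (Metric.closedBall x₁ r) (Metric.closedBall x₂ r)) :
    ∃ g : G, dist x₁ x₂ - 2 * R₀ ≤ dist x₀ (g • x₀) ∧
      ∀ i, ¬ W.SeparatesSets i (Metric.closedBall x₀ (R₀ + r))
        (g • Metric.closedBall x₀ (R₀ + r)) := by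
  obtain ⟨g₁, hg₁⟩ := hR₀ x₁
  obtain ⟨g₂, hg₂⟩ := hR₀ x₂
  refine ⟨g₁⁻¹ * g₂, ?_, fun i hi => h (g₁ • i) ?_⟩
  · have h₁₂ : dist x₀ ((g₁⁻¹ * g₂) • x₀) = dist (g₁ • x₀) (g₂ • x₀) := by
      rw [← dist_smul g₁, mul_smul, smul_inv_smul]
    rw [h₁₂]
    linarith [dist_triangle4 x₁ (g₁ • x₀) (g₂ • x₀) x₂, dist_comm x₂ (g₂ • x₀)]
  · have := hi.smul hact g₁
    rw [Metric.smul_closedBall, ← mul_smul, Metric.smul_closedBall, mul_inv_cancel_left] at this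
    exact this.mono (Metric.closedBall_subset_closedBall' (by linarith))
      (Metric.closedBall_subset_closedBall' (by linarith))

theorem isZeroCube_boolOfOrientation {x₀ : X} {c : ι → Set X × Set X}
    (hc : ∀ i, c i ∈ W.orientations i)
    (hclosure : ∀ i j, ∃ g : G,
      c i = g • W.orientationAt x₀ (g⁻¹ • i) ∧ c j = g • W.orientationAt x₀ (g⁻¹ • j))
    (hfin : {i | c i ≠ W.orientationAt x₀ i}.Finite) : W.IsZeroCube (W.boolOfOrientation c) := by
  have hside : ∀ i, W.side i (W.boolOfOrientation c i) = (c i).1 := fun i =>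
    congrArg Prod.fst (side_boolOfOrientation (hc i))
  refine ⟨fun i j => ?_, fun x => ?_⟩
  · obtain ⟨g, hi, hj⟩ := hclosure i j
    rw [hside, hside, hi, hj]
    exact ⟨g • x₀, Set.smul_mem_smul_set (W.mem_orientationAt_fst _ _),
      Set.smul_mem_smul_set (W.mem_orientationAt_fst _ _)⟩
  · refine (hfin.union (W.finite_setOf_notMem_orientationAt_fst x₀ x)).subset fun i hi => ?_
    by_contra h
    simp only [Set.mem_union, Set.mem_ofPred_eq, not_or, not_not] at h hi
    exact hi (by rw [hside, h.1]; exact h.2)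

theorem side_boolOfOrientation_smul {c : ι → Set X × Set X} (hc : ∀ i, c i ∈ W.orientations i)
    {g : G} {i : ι} (h : c (g • i) = g • c i) :
    W.side (g • i) (W.boolOfOrientation c (g • i)) = g • W.side i (W.boolOfOrientation c i) ∧
      W.side (g • i) (!W.boolOfOrientation c (g • i)) =
        g • W.side i (!W.boolOfOrientation c i) := by
  have := side_boolOfOrientation (hc (g • i))
  rwa [h, ← side_boolOfOrientation (hc i), Prod.smul_mk, Prod.mk.injEq] at this

end Action

end Wallspace

/-- **Ball–Ball separation.**  Let `X` be a metric space with a wallspace structure in which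
every ball of finite radius is crossed by only finitely many walls.  Suppose `G` acts on the
wallspace by isometries, the action on `X` is cobounded, and the induced action on the dual
cube complex is proper (every `0`-cube has finite stabilizer).  Then for each `r > 0` there
exists `m` such that any two points at distance more than `m` have their `r`-neighborhoods
separated by a wall. -/
theorem ball_ball_separation
    {G X ι : Type*} [Group G] [MetricSpace X] [MulAction G X] [MulAction G ι]
    (W : Wallspace X ι) (hact : WallspaceAction G W)
    (hiso : ∀ (g : G) (x y : X), dist (g • x) (g • y) = dist x y)
    (hballs : ∀ (x : X) (r : ℝ), {i : ι | W.Crosses i (Metric.closedBall x r)}.Finite)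
    (hcobound : ∃ (x₀ : X) (R₀ : ℝ), ∀ x : X, ∃ g : G, dist x (g • x₀) ≤ R₀)
    (hproper : ∀ c : ι → Bool, W.IsZeroCube c →
      {g : G | ∀ i : ι,
        W.side (g • i) (c (g • i)) = g • W.side i (c i) ∧
        W.side (g • i) (!(c (g • i))) = g • W.side i (!(c i))}.Finite) :
    ∀ r : ℝ, 0 < r → ∃ m : ℝ, ∀ x₁ x₂ : X, dist x₁ x₂ > m →
      ∃ (i : ι) (b : Bool),
        Metric.closedBall x₁ r ⊆ W.openSide i b ∧
        Metric.closedBall x₂ r ⊆ W.openSide i (!b) := by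
  intro r hr
  obtain ⟨x₀, R₀, hR₀⟩ := hcobound
  have : IsIsometricSMul G X := ⟨fun g => Isometry.of_dist_eq (hiso g)⟩
  set A := Metric.closedBall x₀ (R₀ + r)
  have hx₀ : x₀ ∈ A := Metric.mem_closedBall_self (by
    obtain ⟨g, hg⟩ := hR₀ x₀
    linarith [dist_nonneg.trans hg])
  set S := {g : G | ∀ j, ¬ W.SeparatesSets j A (g • A)}
  by_contra! hfar
  have hS : S.Infinite := by
    refine Set.Infinite.of_image (fun g => dist x₀ (g • x₀))
      (Set.infinite_of_not_bddAbove fun ⟨M, hM⟩ => ?_)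
    obtain ⟨x₁, x₂, hx, hsep⟩ := hfar (M + 2 * R₀)
    obtain ⟨g, hg, hgS⟩ := Wallspace.exists_smul_not_separatesSets hact hR₀ fun i hi =>
      hi.exists_subset_openSide.elim fun b hb => hsep i b hb.1 hb.2
    linarith [hM ⟨g, hgS, rfl⟩]
  obtain ⟨c, hcP, hclosure, hfin, hstab⟩ := exists_translate_limit_stabilizer_infinite
    W.orientations Wallspace.orientations_finite
    (fun g _ _ hp => Wallspace.smul_mem_orientations hact g hp) (W.orientationAt_mem x₀)
    (hballs x₀ (R₀ + r)) hS fun g hg _ hi hgi => Wallspace.orientationAt_smul hact hx₀ hg hi hgi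
  exact hstab ((hproper _ (Wallspace.isZeroCube_boolOfOrientation hcP hclosure hfin)).subset
    fun g hg i => Wallspace.side_boolOfOrientation_smul hcP (hg i))
end

section
/- (Walls reversible at a common 0-cube cannot be separated) Let (X, W) be a wallspace and let c be a 0-cube of the dual cube complex. If two distinct wall indices i ≠ j are both reversible at c, then either the walls i and j are transverse, or no wall separates i from j (so i and j either are transverse or osculate). -/
/-!
Both closed halfspaces of a wall `l` reversible at `c` are left halfspaces of `0`-cubes that
agree with `c` away from `l`, so each of them meets the halfspace that `c` picks for any other
wall `k`. If `k` separated `i` from `j`, a halfspace of `i` and a halfspace of `j` would lie in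
opposite open halfspaces of `k` and both meet `c`'s halfspace of `k`, which would then have to
be on both sides of `k`.
-/

open Pointwise

namespace Wallspace

variable {X ι : Type*} {W : Wallspace X ι}

theorem eq_of_mem_openSide_of_mem_side {k : ι} {a b : Bool} {x : X}
    (hxa : x ∈ W.openSide k a) (hxb : x ∈ W.side k b) : b = a := by
  by_contra hba
  rw [Bool.eq_not.mpr hba] at hxb
  exact hxa.2 hxb

theorem Reversible.isZeroCube_update [DecidableEq ι] {c : ι → Bool} {l : ι}
    (hl : W.Reversible c l) :
    W.IsZeroCube (Function.update c l (!c l)) :=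
  hl _ (Function.update_self _ _ _) fun _ hm => Function.update_of_ne hm _ _

theorem Reversible.side_inter_side_nonempty {c : ι → Bool} (hc : W.IsZeroCube c) {l k : ι}
    (hl : W.Reversible c l) (hlk : l ≠ k) (b : Bool) :
    (W.side l b ∩ W.side k (c k)).Nonempty := by
  classical
  rcases Bool.eq_or_eq_not b (c l) with rfl | rfl
  · exact hc.1 l k
  · simpa only [Function.update_self, Function.update_of_ne hlk.symm] using
      hl.isZeroCube_update.1 l k

end Wallspace

theorem reversible_at_common_cube_transverse_or_unseparated_general
    {X ι : Type*} (W : Wallspace X ι)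
    (c : ι → Bool) (hc : W.IsZeroCube c)
    (i j : ι)
    (hi : W.Reversible c i) (hj : W.Reversible c j) :
    W.Transverse i j ∨ ∀ k : ι, ¬ W.SeparatesWalls k i j := by
  right
  rintro k ⟨hki, hkj, a, bi, bj, hbi, hbj⟩
  obtain ⟨x, hxi, hxk⟩ := hi.side_inter_side_nonempty hc hki.symm bi
  obtain ⟨y, hyj, hyk⟩ := hj.side_inter_side_nonempty hc hkj.symm bj
  have hka : c k = a := Wallspace.eq_of_mem_openSide_of_mem_side (hbi hxi) hxk
  have hkna : c k = !a := Wallspace.eq_of_mem_openSide_of_mem_side (hbj hyj) hyk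
  exact Bool.not_ne_self a (hka ▸ hkna).symm

/-- **Walls reversible at a common `0`-cube cannot be separated.**  If two distinct walls
`i ≠ j` are both reversible at a `0`-cube `c` of the dual cube complex, then either `i` and
`j` are transverse, or no wall separates `i` from `j` (so `i` and `j` are transverse or
osculate). -/
theorem reversible_at_common_cube_transverse_or_unseparated
    {X ι : Type*} (W : Wallspace X ι)
    (c : ι → Bool) (hc : W.IsZeroCube c)
    (i j : ι) (hij : i ≠ j)
    (hi : W.Reversible c i) (hj : W.Reversible c j) :
    W.Transverse i j ∨ ∀ k : ι, ¬ W.SeparatesWalls k i j :=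
  reversible_at_common_cube_transverse_or_unseparated_general W c hc i j hi hj
end

section
/- (Betwixt-finiteness for translates of an H-wall) Let G be a group, H ≤ G a subgroup, and let {U, V} be a pair of subsets of G with G = U ∪ V, which is H-invariant ({hU, hV} = {U, V} for all h ∈ H), and such that U ∩ V ⊆ H·F for some finite subset F ⊆ G. Then for each x ∈ G, the set of unordered pairs of subsets {g⁻¹U, g⁻¹V}, ranging over g ∈ G, such that x ∈ g⁻¹U ∩ g⁻¹V (i.e., x betwixts the wall g⁻¹{U, V}) is finite. -/
open Pointwise

/-! If `x` betwixts `g⁻¹{U, V}` then `g x ∈ U ∩ V ⊆ H F`, say `g x = h f`, so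
`g⁻¹ = x f⁻¹ h⁻¹`. As `h⁻¹ ∈ H` only permutes `{U, V}`, the wall `g⁻¹{U, V}` equals
`(x f⁻¹){U, V}`, and there are only finitely many choices of `f ∈ F`. -/

namespace Wall

variable {G : Type*} [Group G]

/-- The unordered wall `g{U, V}`, encoded by both of its orderings. -/
def translates (U V : Set G) (g : G) : Set (Set G × Set G) :=
  {(g • U, g • V), (g • V, g • U)}

theorem translates_finite (U V : Set G) (g : G) : (translates U V g).Finite :=
  (Set.finite_singleton _).insert _

theorem translates_mul_of_swap {U V : Set G} {h : G}
    (hh : (h • U = U ∧ h • V = V) ∨ (h • U = V ∧ h • V = U)) (g : G) :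
    translates U V (g * h) = translates U V g := by
  rcases hh with ⟨hU, hV⟩ | ⟨hU, hV⟩ <;>
    simp only [translates, mul_smul, hU, hV, Set.pair_comm]

theorem inv_eq_of_mul_eq {g x h f : G} (hgx : h * f = g * x) : g⁻¹ = x * f⁻¹ * h⁻¹ := by
  rw [mul_assoc, ← mul_inv_rev, hgx, mul_inv_rev, mul_inv_cancel_left]

end Wall

theorem betwixt_finiteness_for_translated_HWall_general
    {G : Type*} [Group G] (H : Subgroup G) (U V : Set G)
    (hinv : ∀ h ∈ H, (h • U = U ∧ h • V = V) ∨ (h • U = V ∧ h • V = U))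
    (F : Finset G) (hUV : U ∩ V ⊆ (H : Set G) * (F : Set G)) :
    ∀ x : G,
      {p : Set G × Set G | ∃ g : G,
        (p = (g⁻¹ • U, g⁻¹ • V) ∨ p = (g⁻¹ • V, g⁻¹ • U)) ∧
        x ∈ (g⁻¹ • U) ∩ (g⁻¹ • V)}.Finite := by
  intro x
  refine (F.finite_toSet.biUnion fun f _ => Wall.translates_finite U V (x * f⁻¹)).subset ?_
  rintro p ⟨g, hp, hxU, hxV⟩
  obtain ⟨h, hh, f, hf, hgx⟩ :=
    hUV ⟨Set.mem_inv_smul_set_iff.mp hxU, Set.mem_inv_smul_set_iff.mp hxV⟩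
  refine Set.mem_biUnion hf ?_
  rw [← Wall.translates_mul_of_swap (hinv h⁻¹ (inv_mem hh)), ← Wall.inv_eq_of_mul_eq hgx]
  exact hp

/-- **Betwixt-finiteness for translates of an `H`-wall.**  Let `{U, V}` be a pair of subsets
of a group `G` with `G = U ∪ V`, `H`-invariant, and with `U ∩ V ⊆ H·F` for a finite `F`.
Then for each `x ∈ G`, only finitely many of the translated walls `{g⁻¹U, g⁻¹V}` (as
unordered pairs of subsets) betwixt `x`. -/
theorem betwixt_finiteness_for_translated_HWall
    {G : Type*} [Group G] (H : Subgroup G) (U V : Set G)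
    (hcover : U ∪ V = Set.univ)
    (hinv : ∀ h ∈ H, (h • U = U ∧ h • V = V) ∨ (h • U = V ∧ h • V = U))
    (F : Finset G) (hUV : U ∩ V ⊆ (H : Set G) * (F : Set G)) :
    ∀ x : G,
      {p : Set G × Set G | ∃ g : G,
        (p = (g⁻¹ • U, g⁻¹ • V) ∨ p = (g⁻¹ • V, g⁻¹ • U)) ∧
        x ∈ (g⁻¹ • U) ∩ (g⁻¹ • V)}.Finite :=
  betwixt_finiteness_for_translated_HWall_general H U V hinv F hUV
end

section
/- (Separation-finiteness for translates of an H-wall) Let G be a group with finite generating set S, H ≤ G a subgroup, and let {U, V} be a pair of subsets of G with G = U ∪ V which is H-invariant ({hU, hV} = {U, V} for all h ∈ H). Let Ḧ = {h ∈ H : hU = U and hV = V}, and suppose the frontier of U with respect to S is contained in Ḧ·F for some finite F ⊆ G. Then for all x, y ∈ G, the set of unordered pairs of subsets {g⁻¹U, g⁻¹V}, ranging over g ∈ G, such that the wall g⁻¹{U, V} separates x and y (x and y lie in distinct open halfspaces g⁻¹U ∖ (g⁻¹U ∩ g⁻¹V) and g⁻¹V ∖ (g⁻¹U ∩ g⁻¹V))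 is finite. -/
open Pointwise

/-- The frontier of `A ⊆ G` with respect to the finite generating set `S`. -/
def frontierIn {G : Type*} [Group G] (S : Finset G) (A : Set G) : Set G :=
  {a : G | a ∈ A ∧ ∃ s : G, (s ∈ S ∨ s⁻¹ ∈ S) ∧ a * s ∉ A}

/-!
If the wall `g⁻¹{U, V}` separates `x` from `y`, then a fixed path from `x` to `y` in the Cayley
graph leaves `g⁻¹U`, so one of its finitely many vertices `q` satisfies `g q ∈ frontier U ⊆ Ḧ F`.
Writing `g q = h f` with `h ∈ Ḧ`, `f ∈ F` gives `g⁻¹{U, V} = q f⁻¹ {U, V}`, and there are only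
finitely many such `q f⁻¹`.
-/

section

variable {G : Type*} [Group G]

lemma frontierIn_smul (S : Finset G) (g : G) (A : Set G) :
    frontierIn S (g • A) = g • frontierIn S A := by
  ext a
  simp only [frontierIn, Set.mem_smul_set_iff_inv_smul_mem, Set.mem_ofPred_eq, smul_eq_mul,
    mul_assoc]

/-- `P` is the vertex set of a path from `x` to `x * w` in the Cayley graph. -/
lemma exists_finite_inter_frontierIn_nonempty {S : Finset G} {w : G}
    (hw : w ∈ Subgroup.closure (S : Set G)) (x : G) :
    ∃ P : Set G, P.Finite ∧
      ∀ A : Set G, x ∈ A → x * w ∉ A → (P ∩ frontierIn S A).Nonempty := by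
  induction hw using Subgroup.closure_induction'' generalizing x with
  | mem s hs =>
    exact ⟨{x}, Set.finite_singleton x, fun A hx hxs => ⟨x, rfl, hx, s, Or.inl hs, hxs⟩⟩
  | inv_mem s hs =>
    exact ⟨{x}, Set.finite_singleton x,
      fun A hx hxs => ⟨x, rfl, hx, s⁻¹, Or.inr (by simpa using hs), hxs⟩⟩
  | one => exact ⟨∅, Set.finite_empty, fun A hx hx' => absurd (by simpa using hx) hx'⟩
  | mul w₁ w₂ _ _ ih₁ ih₂ =>
    obtain ⟨P₁, hP₁, hitP₁⟩ := ih₁ x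
    obtain ⟨P₂, hP₂, hitP₂⟩ := ih₂ (x * w₁)
    refine ⟨P₁ ∪ P₂, hP₁.union hP₂, fun A hx hxw => ?_⟩
    by_cases hmid : x * w₁ ∈ A
    · exact (hitP₂ A hmid (by rwa [mul_assoc])).mono
        (Set.inter_subset_inter_left _ Set.subset_union_right)
    · exact (hitP₁ A hx hmid).mono (Set.inter_subset_inter_left _ Set.subset_union_left)

lemma exists_finite_inter_frontierIn_nonempty_of_separates {S : Finset G}
    (hS : Subgroup.closure (S : Set G) = ⊤) (x y : G) :
    ∃ P : Set G, P.Finite ∧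
      ∀ A : Set G, (x ∈ A ↔ y ∉ A) → (P ∩ frontierIn S A).Nonempty := by
  have hmem : ∀ w : G, w ∈ Subgroup.closure (S : Set G) := fun w => hS ▸ Subgroup.mem_top w
  obtain ⟨P, hP, hitP⟩ := exists_finite_inter_frontierIn_nonempty (hmem (x⁻¹ * y)) x
  obtain ⟨Q, hQ, hitQ⟩ := exists_finite_inter_frontierIn_nonempty (hmem (y⁻¹ * x)) y
  refine ⟨P ∪ Q, hP.union hQ, fun A hxy => ?_⟩
  simp only [mul_inv_cancel_left] at hitP hitQ
  by_cases hx : x ∈ A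
  · exact (hitP A hx (hxy.mp hx)).mono (Set.inter_subset_inter_left _ Set.subset_union_left)
  · exact (hitQ A (not_not.mp (mt hxy.mpr hx)) hx).mono
      (Set.inter_subset_inter_left _ Set.subset_union_right)

lemma inv_smul_eq_of_mul_eq_mul {A : Set G} {g h f q : G} (hA : h • A = A)
    (hhf : h * f = g * q) : g⁻¹ • A = (q * f⁻¹) • A := by
  have hg : g⁻¹ = q * f⁻¹ * h⁻¹ := by
    rw [eq_mul_inv_iff_mul_eq, eq_mul_inv_iff_mul_eq, mul_assoc, hhf, inv_mul_cancel_left]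
  rw [hg, mul_smul, inv_smul_eq_iff.mpr hA.symm]

end

theorem separation_finiteness_for_translated_HWall_general
    {G : Type*} [Group G]
    (S : Finset G) (hS : Subgroup.closure (S : Set G) = ⊤)
    (H : Subgroup G) (U V : Set G)
    (F : Finset G)
    (hfr : frontierIn S U ⊆ {h : G | h ∈ H ∧ h • U = U ∧ h • V = V} * (F : Set G)) :
    ∀ x y : G,
      {p : Set G × Set G | ∃ g : G,
        (p = (g⁻¹ • U, g⁻¹ • V) ∨ p = (g⁻¹ • V, g⁻¹ • U)) ∧
        ((x ∈ (g⁻¹ • U) \ (g⁻¹ • V) ∧ y ∈ (g⁻¹ • V) \ (g⁻¹ • U)) ∨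
         (x ∈ (g⁻¹ • V) \ (g⁻¹ • U) ∧ y ∈ (g⁻¹ • U) \ (g⁻¹ • V)))}.Finite := by
  intro x y
  obtain ⟨P, hP, hitP⟩ := exists_finite_inter_frontierIn_nonempty_of_separates hS x y
  have hK : (P * (F : Set G)⁻¹).Finite := hP.mul F.finite_toSet.inv
  refine ((hK.image fun k => (k • U, k • V)).union (hK.image fun k => (k • V, k • U))).subset ?_
  rintro p ⟨g, hp, hsep⟩
  have hxy : x ∈ g⁻¹ • U ↔ y ∉ g⁻¹ • U := by
    simp only [Set.mem_sdiff] at hsep; tauto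
  obtain ⟨q, hqP, hq⟩ := hitP _ hxy
  rw [frontierIn_smul, Set.mem_smul_set_iff_inv_smul_mem, inv_inv, smul_eq_mul] at hq
  obtain ⟨h, ⟨-, hhU, hhV⟩, f, hf, hhf⟩ := hfr hq
  have hk : q * f⁻¹ ∈ P * (F : Set G)⁻¹ := Set.mul_mem_mul hqP (Set.inv_mem_inv.mpr hf)
  rw [inv_smul_eq_of_mul_eq_mul hhU hhf, inv_smul_eq_of_mul_eq_mul hhV hhf] at hp
  rcases hp with rfl | rfl
  · exact Or.inl ⟨_, hk, rfl⟩
  · exact Or.inr ⟨_, hk, rfl⟩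

/-- **Separation-finiteness for translates of an `H`-wall.**  Let `G` have finite generating
set `S`, let `{U, V}` cover `G` and be `H`-invariant, and suppose the frontier of `U` is
`Ḧ`-finite, where `Ḧ = {h ∈ H : hU = U ∧ hV = V}`.  Then for all `x, y ∈ G`, only finitely
many of the translated walls `{g⁻¹U, g⁻¹V}` (as unordered pairs of subsets) separate `x`
from `y`. -/
theorem separation_finiteness_for_translated_HWall
    {G : Type*} [Group G]
    (S : Finset G) (hS : Subgroup.closure (S : Set G) = ⊤)
    (H : Subgroup G) (U V : Set G)
    (hcover : U ∪ V = Set.univ)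
    (hinv : ∀ h ∈ H, (h • U = U ∧ h • V = V) ∨ (h • U = V ∧ h • V = U))
    (F : Finset G)
    (hfr : frontierIn S U ⊆ {h : G | h ∈ H ∧ h • U = U ∧ h • V = V} * (F : Set G)) :
    ∀ x y : G,
      {p : Set G × Set G | ∃ g : G,
        (p = (g⁻¹ • U, g⁻¹ • V) ∨ p = (g⁻¹ • V, g⁻¹ • U)) ∧
        ((x ∈ (g⁻¹ • U) \ (g⁻¹ • V) ∧ y ∈ (g⁻¹ • V) \ (g⁻¹ • U)) ∨
         (x ∈ (g⁻¹ • V) \ (g⁻¹ • U) ∧ y ∈ (g⁻¹ • U) \ (g⁻¹ • V)))}.Finite :=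
  separation_finiteness_for_translated_HWall_general S hS H U V F hfr
end
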